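/- Let L ≥ 1 and let A_1,…,A_{L+1}, B_1,…,B_{L+1}, M_1,…,M_{L+1}, N_1,…,N_{L+1} be real matrices such that for each i, A_i and B_i have size d_{i−1} × d_i and M_i, N_i have size d_i × d_i (so the products below are defined). Assume: ‖A‖ ≥ √(L + 1/2), where ‖A‖ = (Σ_i ‖A_i‖_F²)^{1/2}; for all i, ‖M_i‖_op ≤ 1 and ‖N_i‖_op ≤ 1; and for all i, ‖M_i − N_i‖_op ≤ κ. Then, writing ‖A − B‖ = (Σ_i ‖A_i − B_i‖_F²)^{1/2}, one has ‖Π_{i=1}^{L+1}(A_i M_i) − Π_{i=1}^{L+1}(B_i N_i)‖_op ≤ (3/2)·(‖A‖ + ‖A − B‖)^{L+1}·(κ·‖A‖ + ‖A − B‖). -/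

import Mathlib

open scoped BigOperators
noncomputable section

/-- Operator (ℓ²→ℓ²) norm of a real matrix. -/
def opNorm {m k : ℕ} (A : Matrix (Fin m) (Fin k) ℝ) : ℝ :=
  ‖LinearMap.toContinuousLinearMap (Matrix.toEuclideanLin A)‖

/-- Frobenius norm of a matrix. -/
def frobNorm {m k : ℕ} (A : Matrix (Fin m) (Fin k) ℝ) : ℝ :=
  Real.sqrt (∑ i, ∑ j, A i j ^ 2)

/-- The product `A_1 M_1 A_2 M_2 ⋯ A_m M_m` (with paper index `i = 1, …, m`
corresponding to 0-based index `i - 1`), for matrices of compatible sizes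
`A_i : d_{i-1} × d_i`, `M_i : d_i × d_i`. -/
def chainProd (d : ℕ → ℕ) (A : (i : ℕ) → Matrix (Fin (d i)) (Fin (d (i + 1))) ℝ)
    (M : (i : ℕ) → Matrix (Fin (d (i + 1))) (Fin (d (i + 1))) ℝ) :
    (m : ℕ) → Matrix (Fin (d 0)) (Fin (d m)) ℝ
  | 0 => 1
  | m + 1 => chainProd d A M m * A m * M m

/-!
Every factor `Aᵢ Mᵢ` and `Bᵢ Nᵢ` has operator norm at most `‖A‖ + ‖A - B‖`, so telescoping
`P (A M) - Q (B N) = (P - Q) (A M) + Q (A M - B N)` bounds the difference of the products by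
`(‖A‖ + ‖A - B‖)^L ∑ᵢ ‖Aᵢ Mᵢ - Bᵢ Nᵢ‖_op`, and `‖Aᵢ Mᵢ - Bᵢ Nᵢ‖_op ≤ ‖Aᵢ - Bᵢ‖_F + κ ‖Aᵢ‖_F`.
By Cauchy–Schwarz the sum is at most `√(L + 1) (κ ‖A‖ + ‖A - B‖)`, and the hypothesis on `‖A‖`
gives `√(L + 1) ≤ (3/2) √(L + 1/2) ≤ (3/2) ‖A‖`.
-/

theorem Real.sum_le_sqrt_card_mul_sqrt_sum_sq {ι : Type*} (s : Finset ι) (f : ι → ℝ) :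
    ∑ i ∈ s, f i ≤ √(s.card : ℝ) * √(∑ i ∈ s, f i ^ 2) := by
  simpa using Real.sum_mul_le_sqrt_mul_sqrt s (fun _ => 1) f

theorem Real.sum_add_mul_le_sqrt_card_mul {ι : Type*} (s : Finset ι) (f g : ι → ℝ) {κ : ℝ}
    (hκ : 0 ≤ κ) :
    ∑ i ∈ s, (f i + κ * g i) ≤ √(s.card : ℝ) * (κ * √(∑ i ∈ s, g i ^ 2) + √(∑ i ∈ s, f i ^ 2)) := by
  rw [Finset.sum_add_distrib, ← Finset.mul_sum]
  nlinarith [Real.sum_le_sqrt_card_mul_sqrt_sum_sq s f, Real.sum_le_sqrt_card_mul_sqrt_sum_sq s g]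

theorem Real.le_sqrt_sum_sq {ι : Type*} {s : Finset ι} (f : ι → ℝ) {i : ι} (hi : i ∈ s) :
    f i ≤ √(∑ j ∈ s, f j ^ 2) :=
  (le_abs_self _).trans <| Real.abs_le_sqrt <|
    Finset.single_le_sum (f := fun j => f j ^ 2) (fun _ _ => sq_nonneg _) hi

theorem Real.sqrt_add_one_le_three_halves_mul {x : ℝ} (hx : 0 ≤ x) :
    √(x + 1) ≤ 3 / 2 * √(x + 1 / 2) := by
  rw [show (3 / 2 : ℝ) = √(9 / 4) by rw [show (9 / 4 : ℝ) = (3 / 2) ^ 2 by norm_num,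
    Real.sqrt_sq (by norm_num)], ← Real.sqrt_mul (by norm_num)]
  exact Real.sqrt_le_sqrt (by linarith)

section OpNorm

open scoped Matrix.Norms.L2Operator

variable {a b c : ℕ}

theorem opNorm_eq_norm (A : Matrix (Fin a) (Fin b) ℝ) : opNorm A = ‖A‖ := rfl

theorem opNorm_nonneg (A : Matrix (Fin a) (Fin b) ℝ) : 0 ≤ opNorm A := norm_nonneg A

theorem opNorm_add_le (A B : Matrix (Fin a) (Fin b) ℝ) :
    opNorm (A + B) ≤ opNorm A + opNorm B := norm_add_le A B

theorem opNorm_le_add_opNorm_sub (A B : Matrix (Fin a) (Fin b) ℝ) :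
    opNorm B ≤ opNorm A + opNorm (A - B) := norm_le_insert A B

theorem opNorm_mul_le (A : Matrix (Fin a) (Fin b) ℝ) (B : Matrix (Fin b) (Fin c) ℝ) :
    opNorm (A * B) ≤ opNorm A * opNorm B := Matrix.l2_opNorm_mul A B

theorem opNorm_one_le : opNorm (1 : Matrix (Fin a) (Fin a) ℝ) ≤ 1 := by
  rw [opNorm_eq_norm, Matrix.cstar_norm_def, map_one]
  exact ContinuousLinearMap.norm_id_le

end OpNorm

theorem opNorm_le_frobNorm {m k : ℕ} (A : Matrix (Fin m) (Fin k) ℝ) : opNorm A ≤ frobNorm A := by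
  refine ContinuousLinearMap.opNorm_le_bound _ (Real.sqrt_nonneg _) fun x => ?_
  have hx : ‖x‖ ^ 2 = ∑ j, x j ^ 2 := by
    simp only [EuclideanSpace.norm_sq_eq, Real.norm_eq_abs, sq_abs]
  rw [LinearMap.coe_toContinuousLinearMap', EuclideanSpace.norm_eq, frobNorm,
    ← Real.sqrt_sq (norm_nonneg x), ← Real.sqrt_mul (by positivity), hx, Finset.sum_mul]
  refine Real.sqrt_le_sqrt (Finset.sum_le_sum fun i _ => ?_)
  have hAx : (Matrix.toEuclideanLin A x) i = ∑ j, A i j * x j := rfl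
  rw [Real.norm_eq_abs, sq_abs, hAx]
  exact Finset.sum_mul_sq_le_sq_mul_sq _ _ _

theorem opNorm_le_sqrt_sum_sq_frobNorm {m k : ℕ → ℕ}
    (X : (i : ℕ) → Matrix (Fin (m i)) (Fin (k i)) ℝ) {s : Finset ℕ} {i : ℕ} (hi : i ∈ s) : opNorm (X i) ≤ √(∑ j ∈ s, frobNorm (X j) ^ 2) :=
  (opNorm_le_frobNorm _).trans (Real.le_sqrt_sum_sq (fun j => frobNorm (X j)) hi)

theorem opNorm_mul_le_of_le_one {m k : ℕ} (A : Matrix (Fin m) (Fin k) ℝ)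
    {M : Matrix (Fin k) (Fin k) ℝ} (hM : opNorm M ≤ 1) : opNorm (A * M) ≤ opNorm A :=
  (opNorm_mul_le A M).trans (mul_le_of_le_one_right (opNorm_nonneg A) hM)

theorem opNorm_mul_sub_mul_le {m k : ℕ} (A B : Matrix (Fin m) (Fin k) ℝ)
    {M N : Matrix (Fin k) (Fin k) ℝ} {κ : ℝ} (hN : opNorm N ≤ 1) (hMN : opNorm (M - N) ≤ κ) :
    opNorm (A * M - B * N) ≤ opNorm (A - B) + κ * opNorm A := by
  have hsplit : A * M - B * N = (A - B) * N + A * (M - N) := by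
    rw [Matrix.sub_mul, Matrix.mul_sub]; abel
  rw [hsplit, mul_comm κ]
  exact (opNorm_add_le _ _).trans <| add_le_add (opNorm_mul_le_of_le_one _ hN) <|
    (opNorm_mul_le _ _).trans (mul_le_mul_of_nonneg_left hMN (opNorm_nonneg _))

section ChainProd

variable (d : ℕ → ℕ) (A B : (i : ℕ) → Matrix (Fin (d i)) (Fin (d (i + 1))) ℝ)
  (M N : (i : ℕ) → Matrix (Fin (d (i + 1))) (Fin (d (i + 1))) ℝ)

theorem chainProd_succ (m : ℕ) : chainProd d A M (m + 1) = chainProd d A M m * (A m * M m) :=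
  Matrix.mul_assoc _ _ _

theorem chainProd_one : chainProd d A M 1 = A 0 * M 0 := by
  rw [chainProd_succ, chainProd, Matrix.one_mul]

theorem opNorm_chainProd_le {c : ℝ} {m : ℕ} (h : ∀ i < m, opNorm (A i * M i) ≤ c) :
    opNorm (chainProd d A M m) ≤ c ^ m := by
  induction m with
  | zero => exact opNorm_one_le
  | succ m ih =>
    have hm := ih fun i hi => h i (Nat.lt_succ_of_lt hi)
    rw [chainProd_succ, pow_succ]
    exact (opNorm_mul_le _ _).trans <|
      mul_le_mul hm (h m m.lt_succ_self) (opNorm_nonneg _) ((opNorm_nonneg _).trans hm)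

theorem opNorm_chainProd_sub_le {c : ℝ} {m : ℕ}
    (hA : ∀ i < m + 1, opNorm (A i * M i) ≤ c) (hB : ∀ i < m + 1, opNorm (B i * N i) ≤ c) :
    opNorm (chainProd d A M (m + 1) - chainProd d B N (m + 1)) ≤
      c ^ m * ∑ i ∈ Finset.range (m + 1), opNorm (A i * M i - B i * N i) := by
  induction m with
  | zero => simp [chainProd_one]
  | succ m ih =>
    have ih' :=
      ih (fun i hi => hA i (Nat.lt_succ_of_lt hi)) fun i hi => hB i (Nat.lt_succ_of_lt hi)
    have hQ := opNorm_chainProd_le d B N fun i hi => hB i (Nat.lt_succ_of_lt hi)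
    set a := A (m + 1) * M (m + 1)
    set b := B (m + 1) * N (m + 1)
    set P := chainProd d A M (m + 1)
    set Q := chainProd d B N (m + 1)
    have hsplit : P * a - Q * b = (P - Q) * a + Q * (a - b) := by
      rw [Matrix.sub_mul, Matrix.mul_sub]; abel
    rw [chainProd_succ d A M (m + 1), chainProd_succ d B N (m + 1), hsplit,
      Finset.sum_range_succ, mul_add, pow_succ, mul_right_comm]
    refine (opNorm_add_le _ _).trans (add_le_add ?_ ?_)
    · exact (opNorm_mul_le _ _).trans <| mul_le_mul ih' (hA _ (m + 1).lt_succ_self)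
        (opNorm_nonneg _) ((opNorm_nonneg _).trans ih')
    · rw [← pow_succ]
      exact (opNorm_mul_le _ _).trans (mul_le_mul_of_nonneg_right hQ (opNorm_nonneg _))

end ChainProd

theorem statement13_general (L : ℕ) (d : ℕ → ℕ)
    (A B : (i : ℕ) → Matrix (Fin (d i)) (Fin (d (i + 1))) ℝ)
    (M N : (i : ℕ) → Matrix (Fin (d (i + 1))) (Fin (d (i + 1))) ℝ)
    (κ : ℝ)
    (hA : Real.sqrt ((L : ℝ) + 1 / 2) ≤
      Real.sqrt (∑ i ∈ Finset.range (L + 1), frobNorm (A i) ^ 2))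
    (hM : ∀ i < L + 1, opNorm (M i) ≤ 1)
    (hN : ∀ i < L + 1, opNorm (N i) ≤ 1)
    (hMN : ∀ i < L + 1, opNorm (M i - N i) ≤ κ) :
    opNorm (chainProd d A M (L + 1) - chainProd d B N (L + 1)) ≤
      3 / 2 *
        (Real.sqrt (∑ i ∈ Finset.range (L + 1), frobNorm (A i) ^ 2) +
            Real.sqrt (∑ i ∈ Finset.range (L + 1), frobNorm (A i - B i) ^ 2)) ^ (L + 1) *
        (κ * Real.sqrt (∑ i ∈ Finset.range (L + 1), frobNorm (A i) ^ 2) +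
          Real.sqrt (∑ i ∈ Finset.range (L + 1), frobNorm (A i - B i) ^ 2)) := by
  set α := √(∑ i ∈ Finset.range (L + 1), frobNorm (A i) ^ 2)
  set δ := √(∑ i ∈ Finset.range (L + 1), frobNorm (A i - B i) ^ 2)
  have hκ : 0 ≤ κ := (opNorm_nonneg _).trans (hMN 0 L.succ_pos)
  have hδ : 0 ≤ δ := Real.sqrt_nonneg _
  have hAi : ∀ i < L + 1, opNorm (A i) ≤ α := fun i hi =>
    opNorm_le_sqrt_sum_sq_frobNorm A (Finset.mem_range.2 hi)
  have hABi : ∀ i < L + 1, opNorm (A i - B i) ≤ δ := fun i hi =>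
    opNorm_le_sqrt_sum_sq_frobNorm (fun j => A j - B j) (Finset.mem_range.2 hi)
  have hAM : ∀ i < L + 1, opNorm (A i * M i) ≤ α + δ := fun i hi =>
    (opNorm_mul_le_of_le_one _ (hM i hi)).trans ((hAi i hi).trans (le_add_of_nonneg_right hδ))
  have hBN : ∀ i < L + 1, opNorm (B i * N i) ≤ α + δ := fun i hi =>
    (opNorm_mul_le_of_le_one _ (hN i hi)).trans <|
      (opNorm_le_add_opNorm_sub (A i) (B i)).trans (add_le_add (hAi i hi) (hABi i hi))
  have hfactor : ∀ i ∈ Finset.range (L + 1),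
      opNorm (A i * M i - B i * N i) ≤ frobNorm (A i - B i) + κ * frobNorm (A i) := fun i hi => by
    have hi := Finset.mem_range.1 hi
    refine (opNorm_mul_sub_mul_le _ _ (hN i hi) (hMN i hi)).trans ?_
    gcongr <;> exact opNorm_le_frobNorm _
  have hsqrt : √((L : ℝ) + 1) ≤ 3 / 2 * (α + δ) := by
    linarith [Real.sqrt_add_one_le_three_halves_mul (L.cast_nonneg (α := ℝ))]
  have hκα : 0 ≤ κ * α + δ := add_nonneg (mul_nonneg hκ (Real.sqrt_nonneg _)) hδ
  calc opNorm (chainProd d A M (L + 1) - chainProd d B N (L + 1))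
      ≤ (α + δ) ^ L * ∑ i ∈ Finset.range (L + 1), opNorm (A i * M i - B i * N i) :=
        opNorm_chainProd_sub_le d A B M N hAM hBN
    _ ≤ (α + δ) ^ L * (√((L : ℝ) + 1) * (κ * α + δ)) := by
        gcongr
        simpa using (Finset.sum_le_sum hfactor).trans
          (Real.sum_add_mul_le_sqrt_card_mul (Finset.range (L + 1)) _ _ hκ)
    _ ≤ (α + δ) ^ L * (3 / 2 * (α + δ) * (κ * α + δ)) := by gcongr
    _ = 3 / 2 * (α + δ) ^ (L + 1) * (κ * α + δ) := by ring

/-- Lemma `l:ABCD`: perturbation bound for a product of matrices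
interleaved with operator-norm-contractive factors. -/
theorem statement13 (L : ℕ) (hL : 1 ≤ L) (d : ℕ → ℕ)
    (A B : (i : ℕ) → Matrix (Fin (d i)) (Fin (d (i + 1))) ℝ)
    (M N : (i : ℕ) → Matrix (Fin (d (i + 1))) (Fin (d (i + 1))) ℝ)
    (κ : ℝ)
    (hA : Real.sqrt ((L : ℝ) + 1 / 2) ≤
      Real.sqrt (∑ i ∈ Finset.range (L + 1), frobNorm (A i) ^ 2))
    (hM : ∀ i < L + 1, opNorm (M i) ≤ 1)
    (hN : ∀ i < L + 1, opNorm (N i) ≤ 1)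
    (hMN : ∀ i < L + 1, opNorm (M i - N i) ≤ κ) :
    opNorm (chainProd d A M (L + 1) - chainProd d B N (L + 1)) ≤
      3 / 2 *
        (Real.sqrt (∑ i ∈ Finset.range (L + 1), frobNorm (A i) ^ 2) +
            Real.sqrt (∑ i ∈ Finset.range (L + 1), frobNorm (A i - B i) ^ 2)) ^ (L + 1) *
        (κ * Real.sqrt (∑ i ∈ Finset.range (L + 1), frobNorm (A i) ^ 2) +
          Real.sqrt (∑ i ∈ Finset.range (L + 1), frobNorm (A i - B i) ^ 2)) :=
  statement13_general L d A B M N κ hA hM hN hMN
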